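/- arXiv:2301.00940 — 2 statements merged into one kernel-verified Lean document; each statement's English description precedes it below -/
import Mathlib

section
/- Let {S_μ(x)} (0 < μ ≤ μ_0, x ∈ B_{0.8} ⊂ R^{2n}) satisfy the section-family axioms and additionally 10 S_μ(x) ⊂ S_{121μ}(x) ⊂ 12 S_μ(x) for every x and every 0 < μ ≤ μ_0/121. Let X, Y ⊂ B_{0.8} be measurable and 0 < ε̄ < 1. Assume (a) for every x_0 ∈ B_{0.8} and every μ with μ_0/484 ≤ μ ≤ μ_0/4, m(S_μ(x_0) ∩ X) < ε̄·m(S_μ(x_0)); and (b) whenever m(S_μ(x) ∩ X) ≥ ε̄·m(S_μ(x)) with μ ≤ μ_0/2, then S_μ(x) ⊂ Y. Then m(X) ≤ 12^{2n}·ε̄·m(Y). -/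
/-!
Stopping the heights `μ, 121μ, 121²μ, …` (hypothesis (a) stops them below `μ₀/484`) shows that
every section in which `X` has density at least `ε̄` lies in a section `S_ν(x)` of density at
least `ε̄` whose enlargement `S_{121ν}(x)` has density below `ε̄`. By engulfing, the
`121`-enlargements of a disjoint Vitali subfamily of these stopped sections cover all of them; as
`S_{121ν} ⊆ 12 S_ν` and the stopped sections lie in `Y` by (b), their union `U` satisfies
`m(X ∩ U) ≤ 12^{2n} ε̄ m(Y)`.

In every small section the density of `X \ U` is at most `ε̄ < 1`, which forces `X \ U` to be
null. Cover it, inside an open set `O` of nearly the same measure, by a disjoint Vitali family of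
closed cores of small sections, each core carrying the fraction `θ ∈ (ε̄, 1)` of its section. A
point outside the cores of a finite subfamily has a small section avoiding them, which is engulfed
by the enlargement of a section of the remaining family; as a section contains its contractions
about its centre, the Lebesgue density theorem for balls puts almost every such point inside that
enlargement. The enlargements of the tail have small total measure, so the cores exhaust `X \ U`
up to a null set, and `θ m(X \ U) ≤ ε̄ m(O)`.
-/

open Metric MeasureTheory
open scoped ENNReal

/-- Dilation of a pointed set `S` about the point `x₀` by a factor `c`. -/
def dilate {E : Type*} [NormedAddCommGroup E] [NormedSpace ℝ E]
    (c : ℝ) (x₀ : E) (S : Set E) : Set E :=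
  (fun y => x₀ + c • (y - x₀)) '' S

open Set Filter Topology Bornology Module

section Dilate

variable {E : Type*} [NormedAddCommGroup E] [NormedSpace ℝ E] {c c' : ℝ} {x : E} {s t : Set E}

theorem dilate_eq_image_homothety : dilate c x s = AffineMap.homothety x c '' s := by
  refine image_congr fun y _ => ?_
  rw [AffineMap.homothety_apply, vsub_eq_sub, vadd_eq_add, add_comm]

theorem dilate_mono (h : s ⊆ t) : dilate c x s ⊆ dilate c x t := image_mono h

theorem dilate_one : dilate 1 x s = s := by simp [dilate]

theorem dilate_dilate : dilate c x (dilate c' x s) = dilate (c * c') x s := by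
  simp only [dilate, image_image, add_sub_cancel_left, smul_smul]

theorem dilate_inv_subset_of_subset_dilate (hc : c ≠ 0) (h : s ⊆ dilate c x t) :
    dilate c⁻¹ x s ⊆ t := by
  simpa [dilate_dilate, inv_mul_cancel₀ hc, dilate_one] using dilate_mono (c := c⁻¹) (x := x) h

theorem dilate_closedBall_subset {r : ℝ} (hc : 0 ≤ c) :
    dilate c x (closedBall x r) ⊆ closedBall x (c * r) := by
  rintro _ ⟨y, hy, rfl⟩
  rw [mem_closedBall, dist_eq_norm, add_sub_cancel_left, norm_smul, Real.norm_eq_abs,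
    abs_of_nonneg hc]
  exact mul_le_mul_of_nonneg_left (mem_closedBall_iff_norm.mp hy) hc

theorem dilate_pow_subset (h : dilate c x s ⊆ s) (k : ℕ) : dilate (c ^ k) x s ⊆ s := by
  induction k with
  | zero => rw [pow_zero, dilate_one]
  | succ k ih =>
    rw [pow_succ', ← dilate_dilate]
    exact (dilate_mono ih).trans h

theorem subset_closedBall_of_dilate_subset (hc : c < 1) (h : dilate c x s ⊆ s)
    (hs : IsBounded s) : s ⊆ closedBall x (diam s / (1 - c)) := by
  intro y hy
  have hdist : dist y (x + c • (y - x)) = (1 - c) * ‖y - x‖ := by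
    rw [dist_eq_norm, show y - (x + c • (y - x)) = (1 - c) • (y - x) by module, norm_smul,
      Real.norm_of_nonneg (by linarith)]
  have := hdist ▸ dist_le_diam_of_mem hs hy (h ⟨y, hy, rfl⟩)
  rw [mem_closedBall, dist_eq_norm, le_div_iff₀ (by linarith)]
  linarith

variable [MeasurableSpace E] [BorelSpace E] [FiniteDimensional ℝ E] (m : Measure E)
  [m.IsAddHaarMeasure]

theorem measure_dilate : m (dilate c x s) = ENNReal.ofReal (|c| ^ finrank ℝ E) * m s := by
  rw [dilate_eq_image_homothety, Measure.addHaar_image_homothety, abs_pow]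

theorem mul_measure_le_measure_inter_closedBall (hc₀ : 0 < c) (hc₁ : c < 1) (h : dilate c x s ⊆ s)
    {r R : ℝ} (hR : s ⊆ closedBall x R) (hr : 0 < r) (hrR : r ≤ R) :
    ENNReal.ofReal ((c * r / R) ^ finrank ℝ E) * m s ≤ m (s ∩ closedBall x r) := by
  have hR0 : 0 < R := hr.trans_le hrR
  obtain ⟨k, hk_lt, hk_le⟩ :=
    exists_nat_pow_near_of_lt_one (div_pos hr hR0) ((div_le_one₀ hR0).2 hrR) hc₀ hc₁
  -- the contraction of ratio `c ^ (k + 1) ∈ [c * r / R, r / R)` maps `s` into `closedBall x r`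
  have hsub : dilate (c ^ (k + 1)) x s ⊆ s ∩ closedBall x r := by
    refine subset_inter (dilate_pow_subset h _) ((dilate_mono hR).trans ?_)
    refine (dilate_closedBall_subset (by positivity)).trans (closedBall_subset_closedBall ?_)
    exact ((lt_div_iff₀ hR0).1 hk_lt).le
  calc ENNReal.ofReal ((c * r / R) ^ finrank ℝ E) * m s
      ≤ ENNReal.ofReal (|c ^ (k + 1)| ^ finrank ℝ E) * m s := by
        gcongr
        rw [abs_of_pos (by positivity), pow_succ', mul_div_assoc]
        exact mul_le_mul_of_nonneg_left hk_le hc₀.le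
    _ = m (dilate (c ^ (k + 1)) x s) := (measure_dilate m).symm
    _ ≤ m (s ∩ closedBall x r) := measure_mono hsub

theorem mem_of_tendsto_density (hc₀ : 0 < c) (hc₁ : c < 1) (hst : s ⊆ t)
    (h : dilate c x s ⊆ s) (hs : IsBounded s) (hpos : 0 < m s)
    (hx : Tendsto (fun r => m (t ∩ closedBall x r) / m (closedBall x r)) (𝓝[>] 0)
      (𝓝 (t.indicator 1 x))) : x ∈ t := by
  by_contra hxt
  rw [indicator_of_notMem hxt] at hx
  set R := diam s / (1 - c) + 1
  have hR : 0 < R := add_pos_of_nonneg_of_pos (div_nonneg diam_nonneg (sub_pos.2 hc₁).le) one_pos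
  have hsR : s ⊆ closedBall x R :=
    (subset_closedBall_of_dilate_subset hc₁ h hs).trans (closedBall_subset_closedBall (by simp [R]))
  set κ := ENNReal.ofReal ((c / R) ^ finrank ℝ E) * m s / m (ball (0 : E) 1)
  have hκ : 0 < κ := ENNReal.div_pos (by positivity) measure_ball_lt_top.ne
  have hlow : ∀ r ∈ Ioc 0 R, κ ≤ m (t ∩ closedBall x r) / m (closedBall x r) := by
    rintro r ⟨hr, hrR⟩
    rw [ENNReal.le_div_iff_mul_le (Or.inl (measure_closedBall_pos m x hr).ne')
      (Or.inl measure_closedBall_lt_top.ne), Measure.addHaar_closedBall m x hr.le]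
    calc κ * (ENNReal.ofReal (r ^ finrank ℝ E) * m (ball 0 1))
        = ENNReal.ofReal ((c * r / R) ^ finrank ℝ E) * m s := by
          rw [mul_comm (ENNReal.ofReal _), ← mul_assoc, ENNReal.div_mul_cancel
            (measure_ball_pos m 0 one_pos).ne' measure_ball_lt_top.ne, mul_right_comm,
            ← ENNReal.ofReal_mul (by positivity), ← mul_pow, mul_div_right_comm]
      _ ≤ m (s ∩ closedBall x r) := mul_measure_le_measure_inter_closedBall m hc₀ hc₁ h hsR hr hrR
      _ ≤ m (t ∩ closedBall x r) := measure_mono (inter_subset_inter_left _ hst)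
  obtain ⟨r, hr_lt, hr⟩ := ((hx.eventually_lt_const hκ).and (Ioc_mem_nhdsGT hR)).exists
  exact (hlow r hr).not_gt hr_lt

theorem ae_mem_of_dilate_subset (ht : MeasurableSet t) :
    ∀ᵐ x ∂m, ∀ s ⊆ t, ∀ c ∈ Ioo (0 : ℝ) 1, dilate c x s ⊆ s → IsBounded s → 0 < m s → x ∈ t :=
  (Besicovitch.ae_tendsto_measure_inter_div_of_measurableSet m ht).mono
    fun _ hx _ hst _ hc h hs hpos => mem_of_tendsto_density m hc.1 hc.2 hst h hs hpos hx

end Dilate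

theorem Set.PairwiseDisjoint.countable_of_measure_pos {α ι : Type*} [MeasurableSpace α]
    {μ : Measure α} [SFinite μ] {u : Set ι} {B : ι → Set α} (hu : u.PairwiseDisjoint B)
    (hB : ∀ i ∈ u, NullMeasurableSet (B i) μ) (hpos : ∀ i ∈ u, 0 < μ (B i)) : u.Countable := by
  have := Measure.countable_meas_pos_of_disjoint_iUnion₀ (As := fun i : u => B i)
    (fun i => hB i i.2) fun i j hij => (hu i.2 j.2 (Subtype.coe_injective.ne hij)).aedisjoint
  rw [show {i : u | 0 < μ (B i)} = univ from eq_univ_of_forall fun i => hpos i i.2,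
    countable_univ_iff] at this
  exact countable_coe_iff.mp this

section Cores

variable {E : Type*} [TopologicalSpace E] [MeasurableSpace E]

/-- `q = (x, μ, K)`: `K` is a closed core of the section `S μ x`, carrying at least the fraction
`θ` of its mass. -/
structure IsSectionCore (m : Measure E) (S : ℝ → E → Set E) (W O : Set E) (κ : ℝ) (θ : ℝ≥0∞)
    (q : E × ℝ × Set E) : Prop where
  center_mem : q.1 ∈ W
  height_pos : 0 < q.2.1
  height_le : q.2.1 ≤ κ
  section_subset : S q.2.1 q.1 ⊆ O
  isClosed : IsClosed q.2.2
  subset_section : q.2.2 ⊆ S q.2.1 q.1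
  measure_le : θ * m (S q.2.1 q.1) ≤ m q.2.2

theorem mul_tsum_measure_le_of_isSectionCore [OpensMeasurableSpace E] {m : Measure E}
    {S : ℝ → E → Set E} {W O : Set E} {κ : ℝ} {θ : ℝ≥0∞} {u : Set (E × ℝ × Set E)}
    (hu : u.Countable) (hud : u.PairwiseDisjoint fun q => q.2.2)
    (hcore : ∀ q ∈ u, IsSectionCore m S W O κ θ q) :
    θ * ∑' q : u, m (S q.1.2.1 q.1.1) ≤ m O := by
  rw [← ENNReal.tsum_mul_left]
  calc ∑' q : u, θ * m (S q.1.2.1 q.1.1)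
      ≤ ∑' q : u, m q.1.2.2 := ENNReal.tsum_le_tsum fun q => (hcore q q.2).measure_le
    _ = m (⋃ q ∈ u, q.2.2) :=
      (measure_biUnion hu hud fun q hq => (hcore q hq).isClosed.measurableSet).symm
    _ ≤ m O := measure_mono <| iUnion₂_subset fun q hq =>
      (hcore q hq).subset_section.trans (hcore q hq).section_subset

end Cores

section SectionFamily

variable {E : Type*} [NormedAddCommGroup E] [NormedSpace ℝ E] [MeasurableSpace E]

/-- The section-family axioms for centres in `D` and heights `0 < μ ≤ μ₀`, with `S_μ(x) ⊂ B_1`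
and the volume comparison with `B_{√μ}` weakened to boundedness and positive measure, together
with the nesting `10 S_μ(x) ⊆ S_{121μ}(x) ⊆ 12 S_μ(x)`. -/
structure IsSectionFamily (m : Measure E) (D : Set E) (μ₀ : ℝ) (S : ℝ → E → Set E) : Prop where
  measurableSet : ∀ μ x, MeasurableSet (S μ x)
  isBounded : ∀ μ x, 0 < μ → μ ≤ μ₀ → x ∈ D → IsBounded (S μ x)
  measure_pos : ∀ μ x, 0 < μ → μ ≤ μ₀ → x ∈ D → 0 < m (S μ x)
  engulf : ∀ μ₁ μ₂ x₁ x₂, 0 < μ₁ → μ₁ ≤ μ₀ → 0 < μ₂ → μ₂ ≤ μ₀ → x₁ ∈ D → x₂ ∈ D →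
    √μ₁ ≤ 2 * √μ₂ → (S μ₁ x₁ ∩ S μ₂ x₂).Nonempty → S μ₁ x₁ ⊆ dilate 10 x₂ (S μ₂ x₂)
  diam_le : ∀ ε > (0 : ℝ), ∃ δ > (0 : ℝ), ∀ μ x, 0 < μ → μ ≤ δ → μ ≤ μ₀ → x ∈ D →
    diam (S μ x) ≤ ε
  dilate_subset : ∀ μ x, 0 < μ → μ ≤ μ₀ / 121 → x ∈ D → dilate 10 x (S μ x) ⊆ S (121 * μ) x
  subset_dilate : ∀ μ x, 0 < μ → μ ≤ μ₀ / 121 → x ∈ D → S (121 * μ) x ⊆ dilate 12 x (S μ x)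

namespace IsSectionFamily

variable {m : Measure E} {D W O X Y : Set E} {μ₀ μ κ : ℝ} {S : ℝ → E → Set E} {x : E}
  {ε θ : ℝ≥0∞}

theorem nonempty (hS : IsSectionFamily m D μ₀ S) (hμ : 0 < μ) (hμ₀ : μ ≤ μ₀) (hx : x ∈ D) :
    (S μ x).Nonempty :=
  nonempty_of_measure_ne_zero (hS.measure_pos μ x hμ hμ₀ hx).ne'

theorem measure_lt_top [FiniteDimensional ℝ E] [m.IsAddHaarMeasure]
    (hS : IsSectionFamily m D μ₀ S) (hμ : 0 < μ) (hμ₀ : μ ≤ μ₀) (hx : x ∈ D) : m (S μ x) < ∞ :=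
  (hS.isBounded μ x hμ hμ₀ hx).measure_lt_top

theorem subset_dilate_self (hS : IsSectionFamily m D μ₀ S) (hμ : 0 < μ) (hμ₀ : μ ≤ μ₀)
    (hx : x ∈ D) : S μ x ⊆ dilate 10 x (S μ x) :=
  hS.engulf μ μ x x hμ hμ₀ hμ hμ₀ hx hx (by linarith [Real.sqrt_nonneg μ])
    (by simpa using hS.nonempty hμ hμ₀ hx)

theorem dilate_inv_subset (hS : IsSectionFamily m D μ₀ S) (hμ : 0 < μ) (hμ₀ : μ ≤ μ₀)
    (hx : x ∈ D) : dilate 10⁻¹ x (S μ x) ⊆ S μ x :=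
  dilate_inv_subset_of_subset_dilate (by norm_num) (hS.subset_dilate_self hμ hμ₀ hx)

theorem subset_mul (hS : IsSectionFamily m D μ₀ S) (hμ : 0 < μ) (hμ₀ : μ ≤ μ₀ / 121)
    (hx : x ∈ D) : S μ x ⊆ S (121 * μ) x :=
  (hS.subset_dilate_self hμ (by linarith) hx).trans (hS.dilate_subset μ x hμ hμ₀ hx)

theorem subset_mul_of_inter_nonempty (hS : IsSectionFamily m D μ₀ S) {μ₁ μ₂ : ℝ} {x₁ x₂ : E}
    (hμ₁ : 0 < μ₁) (hμ₁₀ : μ₁ ≤ μ₀) (hμ₂ : 0 < μ₂) (hμ₂₀ : μ₂ ≤ μ₀ / 121) (hx₁ : x₁ ∈ D)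
    (hx₂ : x₂ ∈ D) (hμ : √μ₁ ≤ 2 * √μ₂) (hne : (S μ₁ x₁ ∩ S μ₂ x₂).Nonempty) :
    S μ₁ x₁ ⊆ S (121 * μ₂) x₂ :=
  (hS.engulf μ₁ μ₂ x₁ x₂ hμ₁ hμ₁₀ hμ₂ (by linarith) hx₁ hx₂ hμ hne).trans
    (hS.dilate_subset μ₂ x₂ hμ₂ hμ₂₀ hx₂)

theorem measure_mul_le [BorelSpace E] [FiniteDimensional ℝ E] [m.IsAddHaarMeasure]
    (hS : IsSectionFamily m D μ₀ S) (hμ : 0 < μ) (hμ₀ : μ ≤ μ₀ / 121) (hx : x ∈ D) :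
    m (S (121 * μ) x) ≤ ENNReal.ofReal (12 ^ finrank ℝ E) * m (S μ x) := by
  simpa [measure_dilate] using measure_mono (μ := m) (hS.subset_dilate μ x hμ hμ₀ hx)

theorem exists_subset_closedBall (hS : IsSectionFamily m D μ₀ S) (hx : x ∈ D) {ρ : ℝ}
    (hρ : 0 < ρ) (hκ : 0 < κ) (hκμ₀ : κ ≤ μ₀) :
    ∃ μ, 0 < μ ∧ μ ≤ κ ∧ S μ x ⊆ closedBall x ρ := by
  obtain ⟨δ, hδ, hdiam⟩ := hS.diam_le (ρ / 2) (by positivity)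
  have hμ : 0 < min δ κ := lt_min hδ hκ
  have hμ₀ : min δ κ ≤ μ₀ := (min_le_right _ _).trans hκμ₀
  refine ⟨min δ κ, hμ, min_le_right _ _, ?_⟩
  refine (subset_closedBall_of_dilate_subset (by norm_num) (hS.dilate_inv_subset hμ hμ₀ hx)
    (hS.isBounded _ x hμ hμ₀ hx)).trans (closedBall_subset_closedBall ?_)
  have := hdiam _ x hμ (min_le_left _ _) hμ₀ hx
  rw [div_le_iff₀ (by norm_num)]
  linarith

theorem exists_disjoint_subfamily [SFinite m] (hS : IsSectionFamily m D μ₀ S) {ι : Type*}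
    {t : Set ι} {c : ι → E} {ν : ι → ℝ} {B : ι → Set E} (hc : ∀ i ∈ t, c i ∈ D)
    (hν : ∀ i ∈ t, 0 < ν i ∧ ν i ≤ μ₀ / 121) (hB : ∀ i ∈ t, B i ⊆ S (ν i) (c i))
    (hBm : ∀ i ∈ t, MeasurableSet (B i)) (hBpos : ∀ i ∈ t, 0 < m (B i)) :
    ∃ u ⊆ t, u.Countable ∧ u.PairwiseDisjoint B ∧
      ∀ a ∈ t, ∃ b ∈ u, (B a ∩ B b).Nonempty ∧ S (ν a) (c a) ⊆ S (121 * ν b) (c b) := by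
  obtain ⟨u, hut, hud, hcov⟩ := Vitali.exists_disjoint_subfamily_covering_enlargement B t
    (fun i => √(ν i)) 2 one_lt_two (fun _ _ => Real.sqrt_nonneg _) √(μ₀ / 121)
    (fun i hi => Real.sqrt_le_sqrt (hν i hi).2)
    (fun i hi => nonempty_of_measure_ne_zero (hBpos i hi).ne')
  refine ⟨u, hut, hud.countable_of_measure_pos (fun i hi => (hBm i (hut hi)).nullMeasurableSet)
    (fun i hi => hBpos i (hut hi)), hud, fun a ha => ?_⟩
  obtain ⟨b, hb, hab, hle⟩ := hcov a ha
  obtain ⟨⟨ha₀, ha₁⟩, ⟨hb₀, hb₁⟩⟩ := And.intro (hν a ha) (hν b (hut hb))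
  exact ⟨b, hb, hab, hS.subset_mul_of_inter_nonempty ha₀ (by linarith) hb₀ hb₁ (hc a ha)
    (hc b (hut hb)) hle (hab.mono (inter_subset_inter (hB a ha) (hB b (hut hb))))⟩

theorem exists_stopping_height (hS : IsSectionFamily m D μ₀ S) (hx : x ∈ D)
    (hlow : ∀ μ, μ₀ / 484 ≤ μ → μ ≤ μ₀ / 4 → m (S μ x ∩ X) < ε * m (S μ x))
    (hμ : 0 < μ) (hμ₄ : μ ≤ μ₀ / 4) (hdense : ε * m (S μ x) ≤ m (S μ x ∩ X)) :
    ∃ ν, 0 < ν ∧ ν < μ₀ / 484 ∧ S μ x ⊆ S ν x ∧ ε * m (S ν x) ≤ m (S ν x ∩ X) ∧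
      m (S (121 * ν) x ∩ X) < ε * m (S (121 * ν) x) := by
  obtain ⟨k, hk⟩ := pow_unbounded_of_one_lt (μ₀ / 4 / μ) (by norm_num : (1 : ℝ) < 121)
  rw [div_lt_iff₀ hμ] at hk
  induction k generalizing μ with
  | zero => linarith
  | succ k ih =>
    have hsmall : μ < μ₀ / 484 := not_le.1 fun h => (hlow μ h hμ₄).not_ge hdense
    by_cases hnext : ε * m (S (121 * μ) x) ≤ m (S (121 * μ) x ∩ X)
    · obtain ⟨ν, hν, hν₀, hsub, hνX⟩ :=
        ih (by positivity) (by linarith) hnext (by rw [pow_succ] at hk; linarith)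
      exact ⟨ν, hν, hν₀, (hS.subset_mul hμ (by linarith) hx).trans hsub, hνX⟩
    · exact ⟨μ, hμ, hsmall, subset_rfl, hdense, not_le.1 hnext⟩

theorem measure_inter_iUnion_le [BorelSpace E] [FiniteDimensional ℝ E] [m.IsAddHaarMeasure]
    (hS : IsSectionFamily m D μ₀ S) {t : Set (E × ℝ)}
    (ht : ∀ p ∈ t, p.1 ∈ D ∧ 0 < p.2 ∧ p.2 ≤ μ₀ / 121 ∧ S p.2 p.1 ⊆ Y ∧
      m (S (121 * p.2) p.1 ∩ X) ≤ ε * m (S (121 * p.2) p.1)) :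
    m (X ∩ ⋃ p ∈ t, S p.2 p.1) ≤ ε * ENNReal.ofReal (12 ^ finrank ℝ E) * m Y := by
  obtain ⟨u, hut, hu, hud, hcov⟩ := hS.exists_disjoint_subfamily (t := t)
    (B := fun p => S p.2 p.1) (fun p hp => (ht p hp).1)
    (fun p hp => ⟨(ht p hp).2.1, (ht p hp).2.2.1⟩) (fun _ _ => subset_rfl)
    (fun p _ => hS.measurableSet _ _) fun p hp => hS.measure_pos _ _ (ht p hp).2.1
      (by linarith [(ht p hp).2.1, (ht p hp).2.2.1]) (ht p hp).1
  have hcover : X ∩ ⋃ p ∈ t, S p.2 p.1 ⊆ ⋃ p ∈ u, S (121 * p.2) p.1 ∩ X := by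
    rintro z ⟨hzX, hz⟩
    obtain ⟨a, ha, hza⟩ := mem_iUnion₂.1 hz
    obtain ⟨b, hb, -, hab⟩ := hcov a ha
    exact mem_biUnion hb ⟨hab hza, hzX⟩
  calc m (X ∩ ⋃ p ∈ t, S p.2 p.1)
      ≤ ∑' p : u, m (S (121 * p.1.2) p.1.1 ∩ X) :=
        (measure_mono hcover).trans (measure_biUnion_le m hu _)
    _ ≤ ∑' p : u, ε * ENNReal.ofReal (12 ^ finrank ℝ E) * m (S p.1.2 p.1.1) := by
      refine ENNReal.tsum_le_tsum fun p => ?_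
      obtain ⟨hpD, hp, hp₀, -, hpX⟩ := ht p (hut p.2)
      rw [mul_assoc]
      exact hpX.trans (by gcongr; exact hS.measure_mul_le hp hp₀ hpD)
    _ = ε * ENNReal.ofReal (12 ^ finrank ℝ E) * m (⋃ p ∈ u, S p.2 p.1) := by
      rw [ENNReal.tsum_mul_left, measure_biUnion hu hud fun _ _ => hS.measurableSet _ _]
    _ ≤ ε * ENNReal.ofReal (12 ^ finrank ℝ E) * m Y := by
      gcongr
      exact iUnion₂_subset fun p hp => (ht p (hut hp)).2.2.2.1

theorem exists_isSectionCore_disjoint [BorelSpace E] [FiniteDimensional ℝ E]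
    [m.IsAddHaarMeasure] (hS : IsSectionFamily m D μ₀ S) (hW : W ⊆ D) (hO : IsOpen O)
    (hWO : W ⊆ O) (hκ : 0 < κ) (hκμ₀ : κ ≤ μ₀) (hθ : θ < 1) {F : Set E} (hF : IsClosed F)
    (hx : x ∈ W) (hxF : x ∉ F) :
    ∃ μ K, IsSectionCore m S W O κ θ (x, μ, K) ∧ Disjoint (S μ x) F := by
  obtain ⟨ρ, hρ, hρF⟩ := nhds_basis_closedBall.mem_iff.1 <|
    inter_mem (hO.mem_nhds (hWO hx)) (hF.isOpen_compl.mem_nhds hxF)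
  obtain ⟨μ, hμ, hμκ, hμρ⟩ := hS.exists_subset_closedBall (hW hx) hρ hκ hκμ₀
  have hfin := (hS.measure_lt_top hμ (hμκ.trans hκμ₀) (hW hx)).ne
  have hlt : θ * m (S μ x) < m (S μ x) := by
    simpa using ENNReal.mul_lt_mul_left
      (hS.measure_pos μ x hμ (hμκ.trans hκμ₀) (hW hx)).ne' hfin hθ
  obtain ⟨K, hKS, hK, hKm⟩ := (hS.measurableSet μ x).exists_lt_isCompact_of_ne_top hfin hlt
  have hSF := hμρ.trans hρF
  exact ⟨μ, K, ⟨hx, hμ, hμκ, hSF.trans inter_subset_left, hK.isClosed, hKS, hKm.le⟩,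
    disjoint_left.2 fun _ hz => (hSF hz).2⟩

theorem tsum_measure_mul_ne_top [BorelSpace E] [FiniteDimensional ℝ E] [m.IsAddHaarMeasure]
    (hS : IsSectionFamily m D μ₀ S) (hW : W ⊆ D) (hOfin : m O ≠ ∞) (hκμ₀ : κ ≤ μ₀ / 121)
    (hθ₀ : θ ≠ 0) {u : Set (E × ℝ × Set E)} (hu : u.Countable)
    (hud : u.PairwiseDisjoint fun q => q.2.2) (hcore : ∀ q ∈ u, IsSectionCore m S W O κ θ q) :
    ∑' q : u, m (S (121 * q.1.2.1) q.1.1) ≠ ∞ := by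
  have hmass := mul_tsum_measure_le_of_isSectionCore hu hud hcore
  have hfin : ∑' q : u, m (S q.1.2.1 q.1.1) ≠ ∞ := fun h => hOfin <| top_le_iff.1 <| by
    rwa [h, ENNReal.mul_top hθ₀] at hmass
  refine ne_top_of_le_ne_top (ENNReal.mul_ne_top (ENNReal.ofReal_ne_top
    (r := 12 ^ finrank ℝ E)) hfin) ?_
  rw [← ENNReal.tsum_mul_left]
  exact ENNReal.tsum_le_tsum fun q => hS.measure_mul_le (hcore q q.2).height_pos
    ((hcore q q.2).height_le.trans hκμ₀) (hW (hcore q q.2).center_mem)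

theorem exists_section_subset_mul_of_notMem [BorelSpace E] [FiniteDimensional ℝ E]
    [m.IsAddHaarMeasure] (hS : IsSectionFamily m D μ₀ S) (hW : W ⊆ D) (hO : IsOpen O)
    (hWO : W ⊆ O) (hκ : 0 < κ) (hκμ₀ : κ ≤ μ₀) (hθ : θ < 1) {u : Set (E × ℝ × Set E)}
    (hcore : ∀ q ∈ u, IsSectionCore m S W O κ θ q)
    (hcov : ∀ a, IsSectionCore m S W O κ θ a →
      ∃ b ∈ u, (a.2.2 ∩ b.2.2).Nonempty ∧ S a.2.1 a.1 ⊆ S (121 * b.2.1) b.1)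
    (v : Finset u) (hx : x ∈ W) (hxv : x ∉ ⋃ q ∈ v, q.1.2.2) :
    ∃ q : u, q ∉ v ∧ ∃ μ, 0 < μ ∧ μ ≤ κ ∧ S μ x ⊆ S (121 * q.1.2.1) q.1.1 := by
  obtain ⟨μ, K, hK, hdisj⟩ := hS.exists_isSectionCore_disjoint hW hO hWO hκ hκμ₀ hθ
    (isClosed_biUnion_finset fun q _ => (hcore q.1 q.2).isClosed) hx hxv
  obtain ⟨b, hb, ⟨z, hzK, hzb⟩, hsub⟩ := hcov _ hK
  refine ⟨⟨b, hb⟩, fun hbv => ?_, μ, hK.height_pos, hK.height_le, hsub⟩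
  exact disjoint_left.1 hdisj (hK.subset_section hzK) (mem_biUnion (x := ⟨b, hb⟩) hbv hzb)

theorem exists_isSectionCore_cover_ae [BorelSpace E] [FiniteDimensional ℝ E]
    [m.IsAddHaarMeasure] (hS : IsSectionFamily m D μ₀ S) (hW : W ⊆ D) (hO : IsOpen O)
    (hWO : W ⊆ O) (hOfin : m O ≠ ∞) (hκ : 0 < κ) (hκμ₀ : κ ≤ μ₀ / 121) (hθ₀ : 0 < θ)
    (hθ : θ < 1) :
    ∃ u : Set (E × ℝ × Set E), u.Countable ∧ u.PairwiseDisjoint (fun q => q.2.2) ∧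
      (∀ q ∈ u, IsSectionCore m S W O κ θ q) ∧ m (W \ ⋃ q ∈ u, q.2.2) = 0 := by
  have hκ₀ : κ ≤ μ₀ := by linarith
  obtain ⟨u, hut, hu, hud, hcov⟩ := hS.exists_disjoint_subfamily
    (t := {q | IsSectionCore m S W O κ θ q}) (c := Prod.fst) (ν := fun q => q.2.1)
    (B := fun q => q.2.2) (fun q hq => hW hq.center_mem)
    (fun q hq => ⟨hq.height_pos, hq.height_le.trans hκμ₀⟩) (fun q hq => hq.subset_section)
    (fun q hq => hq.isClosed.measurableSet) fun q hq =>
      (ENNReal.mul_pos hθ₀.ne' (hS.measure_pos _ _ hq.height_pos (hq.height_le.trans hκ₀)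
        (hW hq.center_mem)).ne').trans_le hq.measure_le
  refine ⟨u, hu, hud, hut, ?_⟩
  have : Countable u := hu.to_subtype
  obtain ⟨G, hG, hGmem⟩ := (ae_all_iff.2 fun q : u =>
    ae_mem_of_dilate_subset m (hS.measurableSet (121 * q.1.2.1) q.1.1)).exists_mem
  have htail : ∀ v : Finset u, W \ ⋃ q ∈ u, q.2.2 ⊆
      Gᶜ ∪ ⋃ q : {q : u // q ∉ v}, S (121 * q.1.1.2.1) q.1.1.1 := by
    rintro v x ⟨hx, hxu⟩
    by_cases hxG : x ∈ G
    · have hxv : x ∉ ⋃ q ∈ v, q.1.2.2 := fun h => hxu <| by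
        obtain ⟨q, -, hq⟩ := mem_iUnion₂.1 h
        exact mem_biUnion q.2 hq
      obtain ⟨q, hqv, μ, hμ, hμκ, hsub⟩ :=
        hS.exists_section_subset_mul_of_notMem hW hO hWO hκ hκ₀ hθ hut hcov v hx hxv
      have hμ₀ : μ ≤ μ₀ := hμκ.trans hκ₀
      exact Or.inr <| mem_iUnion.2 ⟨⟨q, hqv⟩, hGmem x hxG q _ hsub 10⁻¹ (by norm_num)
        (hS.dilate_inv_subset hμ hμ₀ (hW hx)) (hS.isBounded μ x hμ hμ₀ (hW hx))
        (hS.measure_pos μ x hμ hμ₀ (hW hx))⟩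
    · exact Or.inl hxG
  refine le_antisymm (ge_of_tendsto' (ENNReal.tendsto_tsum_compl_atTop_zero
    (hS.tsum_measure_mul_ne_top hW hOfin hκμ₀ hθ₀.ne' hu hud hut)) fun v => ?_) zero_le
  calc m (W \ ⋃ q ∈ u, q.2.2)
      ≤ m Gᶜ + m (⋃ q : {q : u // q ∉ v}, S (121 * q.1.1.2.1) q.1.1.1) :=
        (measure_mono (htail v)).trans (measure_union_le _ _)
    _ ≤ ∑' q : {q : u // q ∉ v}, m (S (121 * q.1.1.2.1) q.1.1.1) := by
      rw [mem_ae_iff.1 hG, zero_add]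
      exact measure_iUnion_le _

theorem mul_measure_le_mul_measure_of_isOpen [BorelSpace E] [FiniteDimensional ℝ E]
    [m.IsAddHaarMeasure] (hS : IsSectionFamily m D μ₀ S) (hW : W ⊆ D) (hO : IsOpen O)
    (hWO : W ⊆ O) (hOfin : m O ≠ ∞) (hκ : 0 < κ) (hκμ₀ : κ ≤ μ₀ / 121) (hθ₀ : 0 < θ)
    (hθ : θ < 1) (hdens : ∀ x ∈ D, ∀ μ, 0 < μ → μ ≤ κ → m (S μ x ∩ W) ≤ ε * m (S μ x)) :
    θ * m W ≤ ε * m O := by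
  obtain ⟨u, hu, hud, hcore, hnull⟩ :=
    hS.exists_isSectionCore_cover_ae hW hO hWO hOfin hκ hκμ₀ hθ₀ hθ
  have : Countable u := hu.to_subtype
  have hW_le : m W ≤ ∑' q : u, m (S q.1.2.1 q.1.1 ∩ W) :=
    calc m W ≤ m (W ∩ ⋃ q ∈ u, q.2.2) + m (W \ ⋃ q ∈ u, q.2.2) :=
          measure_le_inter_add_sdiff m W _
      _ = m (⋃ q ∈ u, q.2.2 ∩ W) := by
          rw [hnull, add_zero, inter_iUnion₂]
          simp_rw [inter_comm]
      _ ≤ ∑' q : u, m (q.1.2.2 ∩ W) := measure_biUnion_le m hu _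
      _ ≤ ∑' q : u, m (S q.1.2.1 q.1.1 ∩ W) := ENNReal.tsum_le_tsum fun q =>
          measure_mono (inter_subset_inter_left _ (hcore q q.2).subset_section)
  calc θ * m W ≤ θ * ∑' q : u, ε * m (S q.1.2.1 q.1.1) := by
        gcongr
        exact hW_le.trans <| ENNReal.tsum_le_tsum fun q => hdens _
          (hW (hcore q q.2).center_mem) _ (hcore q q.2).height_pos (hcore q q.2).height_le
    _ = ε * (θ * ∑' q : u, m (S q.1.2.1 q.1.1)) := by rw [ENNReal.tsum_mul_left]; ring
    _ ≤ ε * m O := by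
        gcongr
        exact mul_tsum_measure_le_of_isSectionCore hu hud hcore

theorem measure_eq_zero_of_forall_measure_inter_le [BorelSpace E] [FiniteDimensional ℝ E]
    [m.IsAddHaarMeasure] (hS : IsSectionFamily m D μ₀ S) (hW : W ⊆ D) (hWfin : m W ≠ ∞)
    (hκ : 0 < κ) (hκμ₀ : κ ≤ μ₀ / 121) (hε : ε < 1)
    (hdens : ∀ x ∈ D, ∀ μ, 0 < μ → μ ≤ κ → m (S μ x ∩ W) ≤ ε * m (S μ x)) : m W = 0 := by
  obtain ⟨θ, hεθ, hθ⟩ := exists_between hε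
  have hle : θ * m W ≤ ε * m W := by
    refine ENNReal.le_of_forall_pos_le_add fun δ hδ _ => ?_
    obtain ⟨O, hWO, hO, hOδ⟩ := W.exists_isOpen_lt_of_lt (m W + δ)
      (ENNReal.lt_add_right hWfin (by simpa using hδ.ne'))
    calc θ * m W ≤ ε * m O := hS.mul_measure_le_mul_measure_of_isOpen hW hO hWO
          (hOδ.trans_le le_top).ne hκ hκμ₀ (zero_le.trans_lt hεθ) hθ hdens
      _ ≤ ε * m W + ε * δ := by rw [← mul_add]; gcongr
      _ ≤ ε * m W + δ := by gcongr; exact mul_le_of_le_one_left zero_le hε.le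
  by_contra hW0
  exact ((ENNReal.mul_lt_mul_iff_left hW0 hWfin).2 hεθ).not_ge hle

theorem measure_le_mul_measure [BorelSpace E] [FiniteDimensional ℝ E] [m.IsAddHaarMeasure]
    (hS : IsSectionFamily m D μ₀ S) (hμ₀ : 0 < μ₀) (hXD : X ⊆ D) (hXfin : m X ≠ ∞) (hε : ε < 1)
    (hlow : ∀ x ∈ D, ∀ μ, μ₀ / 484 ≤ μ → μ ≤ μ₀ / 4 → m (S μ x ∩ X) < ε * m (S μ x))
    (hY : ∀ x ∈ D, ∀ μ, 0 < μ → μ ≤ μ₀ / 2 → ε * m (S μ x) ≤ m (S μ x ∩ X) → S μ x ⊆ Y) :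
    m X ≤ ε * ENNReal.ofReal (12 ^ finrank ℝ E) * m Y := by
  set t := {p : E × ℝ | p.1 ∈ D ∧ 0 < p.2 ∧ p.2 ≤ μ₀ / 484 ∧ S p.2 p.1 ⊆ Y ∧
    m (S (121 * p.2) p.1 ∩ X) ≤ ε * m (S (121 * p.2) p.1)}
  set U := ⋃ p ∈ t, S p.2 p.1
  have hstop : ∀ x ∈ D, ∀ μ, 0 < μ → μ ≤ μ₀ / 484 →
      ε * m (S μ x) ≤ m (S μ x ∩ X) → S μ x ⊆ U := by
    intro x hx μ hμ hμκ hdense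
    obtain ⟨ν, hν, hν₀, hsub, hdense', hsparse⟩ :=
      hS.exists_stopping_height hx (hlow x hx) hμ (by linarith) hdense
    have hνt : (x, ν) ∈ t := ⟨hx, hν, hν₀.le, hY x hx ν hν (by linarith) hdense', hsparse.le⟩
    exact hsub.trans (subset_biUnion_of_mem (u := fun p => S p.2 p.1) hνt)
  have hXU : m (X \ U) = 0 := by
    refine hS.measure_eq_zero_of_forall_measure_inter_le (κ := μ₀ / 484)
      (sdiff_subset.trans hXD) (measure_ne_top_of_subset sdiff_subset hXfin) (by positivity)
      (by linarith) hε fun x hx μ hμ hμκ => ?_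
    by_cases hdense : ε * m (S μ x) ≤ m (S μ x ∩ X)
    · have hempty : S μ x ∩ (X \ U) = ∅ :=
        eq_empty_of_forall_notMem fun z hz => hz.2.2 (hstop x hx μ hμ hμκ hdense hz.1)
      simp [hempty]
    · exact (measure_mono (inter_subset_inter_right _ sdiff_subset)).trans (not_le.1 hdense).le
  calc m X ≤ m (X ∩ U) + m (X \ U) := measure_le_inter_add_sdiff _ _ _
    _ ≤ ε * ENNReal.ofReal (12 ^ finrank ℝ E) * m Y := by
      rw [hXU, add_zero]
      exact hS.measure_inter_iUnion_le fun p hp => ⟨hp.1, hp.2.1, by linarith [hp.2.1, hp.2.2.1],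
        hp.2.2.2⟩

end IsSectionFamily

end SectionFamily

theorem section_covering_estimate_general (n : ℕ)
    (μ₀ : ℝ) (hμ₀ : 0 < μ₀)
    (S : ℝ → EuclideanSpace ℝ (Fin (2 * n)) → Set (EuclideanSpace ℝ (Fin (2 * n))))
    (hmeas : ∀ μ x, MeasurableSet (S μ x))
    (hsub : ∀ μ x, 0 < μ → μ ≤ μ₀ → x ∈ ball (0 : EuclideanSpace ℝ (Fin (2 * n))) 0.8 →
      S μ x ⊆ ball (0 : EuclideanSpace ℝ (Fin (2 * n))) 1)
    (C : ℝ)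
    (hvol : ∀ μ x, 0 < μ → μ ≤ μ₀ → x ∈ ball (0 : EuclideanSpace ℝ (Fin (2 * n))) 0.8 →
      volume (ball (0 : EuclideanSpace ℝ (Fin (2 * n))) (Real.sqrt μ))
          ≤ ENNReal.ofReal C * volume (S μ x) ∧
      volume (S μ x)
          ≤ ENNReal.ofReal C * volume (ball (0 : EuclideanSpace ℝ (Fin (2 * n))) (Real.sqrt μ)))
    (heng : ∀ μ₁ μ₂ x₁ x₂, 0 < μ₁ → μ₁ ≤ μ₀ → 0 < μ₂ → μ₂ ≤ μ₀ →
      x₁ ∈ ball (0 : EuclideanSpace ℝ (Fin (2 * n))) 0.8 →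
      x₂ ∈ ball (0 : EuclideanSpace ℝ (Fin (2 * n))) 0.8 →
      Real.sqrt μ₁ ≤ 2 * Real.sqrt μ₂ → (S μ₁ x₁ ∩ S μ₂ x₂).Nonempty →
      S μ₁ x₁ ⊆ dilate 10 x₂ (S μ₂ x₂))
    (hdiam : ∀ ε > (0 : ℝ), ∃ δ > (0 : ℝ), ∀ μ x, 0 < μ → μ ≤ δ → μ ≤ μ₀ →
      x ∈ ball (0 : EuclideanSpace ℝ (Fin (2 * n))) 0.8 → Metric.diam (S μ x) ≤ ε)
    (hnest : ∀ μ x, 0 < μ → μ ≤ μ₀ / 121 →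
      x ∈ ball (0 : EuclideanSpace ℝ (Fin (2 * n))) 0.8 →
      dilate 10 x (S μ x) ⊆ S (121 * μ) x ∧ S (121 * μ) x ⊆ dilate 12 x (S μ x))
    (X Y : Set (EuclideanSpace ℝ (Fin (2 * n))))
    (hXsub : X ⊆ ball (0 : EuclideanSpace ℝ (Fin (2 * n))) 0.8)
    (ebar : ℝ) (hebar1 : ebar < 1)
    (ha : ∀ x₀ ∈ ball (0 : EuclideanSpace ℝ (Fin (2 * n))) 0.8, ∀ μ : ℝ,
      μ₀ / 484 ≤ μ → μ ≤ μ₀ / 4 →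
      volume (S μ x₀ ∩ X) < ENNReal.ofReal ebar * volume (S μ x₀))
    (hb : ∀ x ∈ ball (0 : EuclideanSpace ℝ (Fin (2 * n))) 0.8, ∀ μ : ℝ, 0 < μ → μ ≤ μ₀ / 2 →
      ENNReal.ofReal ebar * volume (S μ x) ≤ volume (S μ x ∩ X) → S μ x ⊆ Y) :
    volume X ≤ ENNReal.ofReal ((12 : ℝ) ^ (2 * n) * ebar) * volume Y := by
  have hS : IsSectionFamily volume (ball 0 0.8) μ₀ S :=
    { measurableSet := hmeas
      isBounded := fun μ x hμ hμ₀ hx => isBounded_ball.subset (hsub μ x hμ hμ₀ hx)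
      measure_pos := fun μ x hμ hμ₀ hx => pos_iff_ne_zero.2 fun h =>
        (measure_ball_pos volume (0 : EuclideanSpace ℝ (Fin (2 * n))) (Real.sqrt_pos.2 hμ)).ne'
          (by simpa [h] using (hvol μ x hμ hμ₀ hx).1)
      engulf := heng
      diam_le := hdiam
      dilate_subset := fun μ x hμ hμ₀ hx => (hnest μ x hμ hμ₀ hx).1
      subset_dilate := fun μ x hμ hμ₀ hx => (hnest μ x hμ hμ₀ hx).2 }
  have := hS.measure_le_mul_measure hμ₀ hXsub (isBounded_ball.subset hXsub).measure_lt_top.ne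
    (ENNReal.ofReal_lt_one.2 hebar1) ha hb
  rwa [finrank_euclideanSpace_fin, mul_comm (ENNReal.ofReal ebar),
    ← ENNReal.ofReal_mul (by positivity)] at this

/-- Measure-theoretic covering estimate: if a section family on `B_{0.8} ⊆ ℝ^{2n}`
satisfies the section-family axioms together with
`10 S_μ(x) ⊆ S_{121μ}(x) ⊆ 12 S_μ(x)` for `μ ≤ μ₀/121`, and `X, Y ⊆ B_{0.8}` are
measurable with (a) `m(S_μ(x₀) ∩ X) < ε̄ m(S_μ(x₀))` for `μ₀/484 ≤ μ ≤ μ₀/4`, and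
(b) `S_μ(x) ⊆ Y` whenever `m(S_μ(x) ∩ X) ≥ ε̄ m(S_μ(x))` with `μ ≤ μ₀/2`, then
`m(X) ≤ 12^{2n} ε̄ m(Y)`. -/
theorem section_covering_estimate (n : ℕ)
    (μ₀ : ℝ) (hμ₀ : 0 < μ₀)
    (S : ℝ → EuclideanSpace ℝ (Fin (2 * n)) → Set (EuclideanSpace ℝ (Fin (2 * n))))
    (hmeas : ∀ μ x, MeasurableSet (S μ x))
    (hsub : ∀ μ x, 0 < μ → μ ≤ μ₀ → x ∈ ball (0 : EuclideanSpace ℝ (Fin (2 * n))) 0.8 →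
      S μ x ⊆ ball (0 : EuclideanSpace ℝ (Fin (2 * n))) 1)
    (C : ℝ) (hC : 0 < C)
    (hvol : ∀ μ x, 0 < μ → μ ≤ μ₀ → x ∈ ball (0 : EuclideanSpace ℝ (Fin (2 * n))) 0.8 →
      volume (ball (0 : EuclideanSpace ℝ (Fin (2 * n))) (Real.sqrt μ))
          ≤ ENNReal.ofReal C * volume (S μ x) ∧
      volume (S μ x)
          ≤ ENNReal.ofReal C * volume (ball (0 : EuclideanSpace ℝ (Fin (2 * n))) (Real.sqrt μ)))
    (heng : ∀ μ₁ μ₂ x₁ x₂, 0 < μ₁ → μ₁ ≤ μ₀ → 0 < μ₂ → μ₂ ≤ μ₀ →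
      x₁ ∈ ball (0 : EuclideanSpace ℝ (Fin (2 * n))) 0.8 →
      x₂ ∈ ball (0 : EuclideanSpace ℝ (Fin (2 * n))) 0.8 →
      Real.sqrt μ₁ ≤ 2 * Real.sqrt μ₂ → (S μ₁ x₁ ∩ S μ₂ x₂).Nonempty →
      S μ₁ x₁ ⊆ dilate 10 x₂ (S μ₂ x₂))
    (hdiam : ∀ ε > (0 : ℝ), ∃ δ > (0 : ℝ), ∀ μ x, 0 < μ → μ ≤ δ → μ ≤ μ₀ →
      x ∈ ball (0 : EuclideanSpace ℝ (Fin (2 * n))) 0.8 → Metric.diam (S μ x) ≤ ε)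
    (hnest : ∀ μ x, 0 < μ → μ ≤ μ₀ / 121 →
      x ∈ ball (0 : EuclideanSpace ℝ (Fin (2 * n))) 0.8 →
      dilate 10 x (S μ x) ⊆ S (121 * μ) x ∧ S (121 * μ) x ⊆ dilate 12 x (S μ x))
    (X Y : Set (EuclideanSpace ℝ (Fin (2 * n))))
    (hX : MeasurableSet X) (hY : MeasurableSet Y)
    (hXsub : X ⊆ ball (0 : EuclideanSpace ℝ (Fin (2 * n))) 0.8)
    (hYsub : Y ⊆ ball (0 : EuclideanSpace ℝ (Fin (2 * n))) 0.8)
    (ebar : ℝ) (hebar : 0 < ebar) (hebar1 : ebar < 1)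
    (ha : ∀ x₀ ∈ ball (0 : EuclideanSpace ℝ (Fin (2 * n))) 0.8, ∀ μ : ℝ,
      μ₀ / 484 ≤ μ → μ ≤ μ₀ / 4 →
      volume (S μ x₀ ∩ X) < ENNReal.ofReal ebar * volume (S μ x₀))
    (hb : ∀ x ∈ ball (0 : EuclideanSpace ℝ (Fin (2 * n))) 0.8, ∀ μ : ℝ, 0 < μ → μ ≤ μ₀ / 2 →
      ENNReal.ofReal ebar * volume (S μ x) ≤ volume (S μ x ∩ X) → S μ x ⊆ Y) :
    volume X ≤ ENNReal.ofReal ((12 : ℝ) ^ (2 * n) * ebar) * volume Y :=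
  section_covering_estimate_general n μ₀ hμ₀ S hmeas hsub C hvol heng hdiam hnest X Y hXsub ebar
    hebar1 ha hb
end

section
/- Let U ⊂ C^n be open with 0 ∈ U, let u : U → R, and let h : U → R be pluriharmonic with h(0) = 0. Let 0 < γ < 1 and μ > 0, and let E_μ(0) = {z : Σ_{i,j} a_{i\bar{j}} z_i \bar{z}_j ≤ μ} with (a_{i\bar{j}}) positive Hermitian. Assume B_{(1−γ)√μ}(0) ⊂ {u ≤ u(0) + μ} ⊂ B_{(1+γ)√μ}(0) ⊂ U and (1−γ)E_μ(0) ⊂ {u ≤ h + u(0) + μ} ⊂ (1+γ)E_μ(0) ⊂ U. Then B_{(1−γ)√μ}(0) ⊂ (1+γ)E_μ(0) and (1−γ)E_μ(0) ⊂ B_{(1+γ)√μ}(0). -/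
open Metric Complex MeasureTheory
open scoped ComplexOrder

noncomputable section

/-- `ℂⁿ` with the Euclidean norm. -/
abbrev CE (n : ℕ) := EuclideanSpace ℂ (Fin n)

/-- Wirtinger derivative `∂f/∂z_i = ½(∂_{x_i} − i ∂_{y_i}) f`. -/
def wD {n : ℕ} (f : CE n → ℂ) (i : Fin n) (z : CE n) : ℂ :=
  (1 / 2) * (fderiv ℝ f z (EuclideanSpace.single i 1)
    - Complex.I * fderiv ℝ f z (EuclideanSpace.single i Complex.I))

/-- Conjugate Wirtinger derivative `∂f/∂z̄_i = ½(∂_{x_i} + i ∂_{y_i}) f`. -/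
def wDbar {n : ℕ} (f : CE n → ℂ) (i : Fin n) (z : CE n) : ℂ :=
  (1 / 2) * (fderiv ℝ f z (EuclideanSpace.single i 1)
    + Complex.I * fderiv ℝ f z (EuclideanSpace.single i Complex.I))

/-- Mixed complex second derivative `u_{i j̄} = ∂²u/∂z_i ∂z̄_j`. -/
def chess {n : ℕ} (u : CE n → ℝ) (i j : Fin n) (z : CE n) : ℂ :=
  wDbar (fun w => wD (fun w' => ((u w' : ℝ) : ℂ)) i w) j z

/-- The complex Hessian matrix `(u_{i j̄})` of `u` at `z`. -/
def hessM {n : ℕ} (u : CE n → ℝ) (z : CE n) : Matrix (Fin n) (Fin n) ℂ :=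
  Matrix.of fun i j => chess u i j z

/-- The Hermitian quadratic form `Σ_{i,j} a_{i j̄} w_i \bar{w}_j` of a matrix. -/
def qform {n : ℕ} (A : Matrix (Fin n) (Fin n) ℂ) (w : Fin n → ℂ) : ℝ :=
  (dotProduct (star w) (A.mulVec w)).re

/-- `h` is pluriharmonic on `U`: it is `C²` there and all mixed complex second
derivatives `h_{i j̄}` vanish on `U`. -/
def PluriharmonicOn {n : ℕ} (h : CE n → ℝ) (U : Set (CE n)) : Prop :=
  ContDiffOn ℝ 2 h U ∧ ∀ z ∈ U, ∀ i j, chess h i j z = 0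

/-- `u` is plurisubharmonic (in the `C²` sense) on `U`: its complex Hessian is
positive semidefinite at every point of `U`. -/
def PshOn {n : ℕ} (u : CE n → ℝ) (U : Set (CE n)) : Prop :=
  ∀ z ∈ U, (hessM u z).PosSemidef

/-!
Restricted to a complex line `l ↦ h (l • z)`, a pluriharmonic function is harmonic: the Laplacian
of the restriction is `D²h (z, z) + D²h (i z, i z)`, and the real form
`D²h (v, w) + D²h (i v, i w)` vanishes on the real basis vectors `e_j, i e_j` precisely because all
`h_{i j̄}` do. By the mean value property, `h 0 = 0` is the average of `h` over the circle
`{e^{iθ} z}`, so `h ≥ 0` at some point of it, and `h ≤ 0` at another. Balls about `0` and dilates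
of `E_μ(0)` are invariant under `z ↦ e^{iθ} z`. A point `z` of `B_{(1-γ)√μ}(0)` can thus be rotated
to one where `h ≥ 0`, which lies in `{u ≤ h + u(0) + μ}` and hence in `(1+γ)E_μ(0)`; so does `z`.
The second inclusion is the same argument at a point where `h ≤ 0`.
-/

theorem LinearMap.apply_add_apply_I_smul_eq_zero_of_basis {ι V : Type*} [AddCommGroup V]
    [Module ℂ V] [Module ℝ V] [IsScalarTower ℝ ℂ V] (b : Module.Basis ι ℂ V)
    (B : V →ₗ[ℝ] V →ₗ[ℝ] ℝ) (hre : ∀ i j, B (b i) (b j) + B (I • b i) (I • b j) = 0)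
    (him : ∀ i j, B (I • b i) (b j) = B (b i) (I • b j)) (v w : V) :
    B v w + B (I • v) (I • w) = 0 := by
  let J : V →ₗ[ℝ] V := (LinearMap.lsmul ℂ V I).restrictScalars ℝ
  suffices B + B.compl₁₂ J J = 0 from LinearMap.congr_fun₂ this v w
  have hJJ : ∀ x : V, I • I • x = -x := fun x => by rw [smul_smul, I_mul_I, neg_one_smul]
  refine LinearMap.ext_basis (basisOneI.smulTower b) (basisOneI.smulTower b) fun p q => ?_
  obtain ⟨k, i⟩ := p
  obtain ⟨l, j⟩ := q
  fin_cases k <;> fin_cases l <;>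
    simp [J, hJJ, hre, him, add_comm (B (I • b i) (I • b j))]

section Pluriharmonic

open InnerProductSpace Laplacian Metric Real Topology

variable {n : ℕ}

theorem wD_ofReal_of_hasFDerivAt {f : CE n → ℝ} {f' : CE n →L[ℝ] ℝ} {z : CE n}
    (hf : HasFDerivAt f f' z) (i : Fin n) :
    wD (fun w => (f w : ℂ)) i z =
      2⁻¹ * (f' (EuclideanSpace.single i 1) - I * f' (EuclideanSpace.single i I)) := by
  have hf' : fderiv ℝ (fun w => (f w : ℂ)) z = ofRealCLM.comp f' :=
    (ofRealCLM.hasFDerivAt.comp z hf).fderiv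
  simp [wD, hf']

open EuclideanSpace in
theorem chess_eq_of_contDiffOn {h : CE n → ℝ} {U : Set (CE n)} (hU : IsOpen U)
    (hC : ContDiffOn ℝ 2 h U) {z : CE n} (hz : z ∈ U) (i j : Fin n) :
    chess h i j z = 4⁻¹ *
      ((fderiv ℝ (fderiv ℝ h) z (single j 1) (single i 1)
        + fderiv ℝ (fderiv ℝ h) z (single j I) (single i I) : ℝ)
      + I * (fderiv ℝ (fderiv ℝ h) z (single j I) (single i 1)
        - fderiv ℝ (fderiv ℝ h) z (single j 1) (single i I) : ℝ)) := by
  have hC' : ContDiffOn ℝ (1 + 1) h U := hC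
  rw [contDiffOn_succ_iff_fderiv_of_isOpen hU] at hC'
  have hD : ∀ w ∈ U, HasFDerivAt h (fderiv ℝ h w) w := fun w hw =>
    (hC'.1.differentiableAt (hU.mem_nhds hw)).hasFDerivAt
  have hD2 : HasFDerivAt (fderiv ℝ h) (fderiv ℝ (fderiv ℝ h) z) z :=
    ((hC'.2.2.differentiableOn one_ne_zero).differentiableAt (hU.mem_nhds hz)).hasFDerivAt
  have hcoord : ∀ v : CE n, HasFDerivAt (fun w => (fderiv ℝ h w v : ℂ))
      (ofRealCLM.comp ((ContinuousLinearMap.apply ℝ ℝ v).comp (fderiv ℝ (fderiv ℝ h) z))) z :=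
    fun v => ofRealCLM.hasFDerivAt.comp z ((ContinuousLinearMap.apply ℝ ℝ v).hasFDerivAt.comp z hD2)
  have hwD : (fun w => wD (fun w' => (h w' : ℂ)) i w) =ᶠ[𝓝 z]
      fun w => 2⁻¹ * ((fderiv ℝ h w (single i 1) : ℂ) - I * (fderiv ℝ h w (single i I) : ℂ)) := by
    filter_upwards [hU.mem_nhds hz] with w hw using wD_ofReal_of_hasFDerivAt (hD w hw) i
  have hwD' := ((hcoord (single i 1)).fun_sub ((hcoord (single i I)).const_mul I)).const_mul
    (2⁻¹ : ℂ)
  rw [chess, wDbar, hwD.fderiv_eq, hwD'.fderiv]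
  simp only [smul_apply, sub_apply, ContinuousLinearMap.coe_comp, Function.comp_apply,
    ofRealCLM_apply, ContinuousLinearMap.apply_apply, smul_eq_mul]
  push_cast
  linear_combination (-4⁻¹ * (fderiv ℝ (fderiv ℝ h) z (single j I) (single i I) : ℂ)) * I_sq

theorem chess_neg (h : CE n → ℝ) (i j : Fin n) (z : CE n) : chess (-h) i j z = -chess h i j z := by
  have hwD : ∀ w, wD (fun w' => ((-h) w' : ℂ)) i w = -wD (fun w' => (h w' : ℂ)) i w := fun w => by
    simp only [wD, Pi.neg_apply, ofReal_neg, fderiv_fun_neg, neg_apply]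
    ring
  simp only [chess, wDbar, hwD, fderiv_fun_neg, neg_apply]
  ring

theorem PluriharmonicOn.neg {h : CE n → ℝ} {U : Set (CE n)} (hph : PluriharmonicOn h U) :
    PluriharmonicOn (-h) U :=
  ⟨hph.1.neg, fun z hz i j => by rw [chess_neg, hph.2 z hz i j, neg_zero]⟩

theorem PluriharmonicOn.fderiv_fderiv_add_I_smul_eq_zero {h : CE n → ℝ} {U : Set (CE n)}
    (hph : PluriharmonicOn h U) (hU : IsOpen U) {z : CE n} (hz : z ∈ U) (v w : CE n) :
    fderiv ℝ (fderiv ℝ h) z v w + fderiv ℝ (fderiv ℝ h) z (I • v) (I • w) = 0 := by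
  have hchess := fun i j => (chess_eq_of_contDiffOn hU hph.1 hz j i).symm.trans (hph.2 z hz j i)
  have hsingle : ∀ i : Fin n, I • EuclideanSpace.single i (1 : ℂ) = EuclideanSpace.single i I :=
    fun i => by ext; simp
  refine LinearMap.apply_add_apply_I_smul_eq_zero_of_basis
    (EuclideanSpace.basisFun (Fin n) ℂ).toBasis (fderiv ℝ (fderiv ℝ h) z).toLinearMap₁₂
    (fun i j => ?_) (fun i j => ?_) v w
  · simpa [hsingle] using congrArg re (hchess i j)
  · simpa [hsingle, sub_eq_zero] using congrArg im (hchess i j)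

theorem PluriharmonicOn.harmonicAt_comp_smul {h : CE n → ℝ} {U : Set (CE n)}
    (hph : PluriharmonicOn h U) (hU : IsOpen U) (z₀ : CE n) {l : ℂ} (hl : l • z₀ ∈ U) :
    HarmonicAt (fun l : ℂ => h (l • z₀)) l := by
  set L : ℂ →L[ℝ] CE n := (ContinuousLinearMap.toSpanSingleton ℂ z₀).restrictScalars ℝ
  have hLU : IsOpen (L ⁻¹' U) := hU.preimage L.continuous
  refine ⟨(hph.1.contDiffAt (hU.mem_nhds hl)).comp l L.contDiff.contDiffAt, ?_⟩
  filter_upwards [hLU.mem_nhds hl] with l' hl'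
  have hcomp := L.iteratedFDerivWithin_comp_right hph.1 hU.uniqueDiffOn hLU.uniqueDiffOn hl'
    (i := 2) le_rfl
  rw [iteratedFDerivWithin_of_isOpen 2 hLU hl', iteratedFDerivWithin_of_isOpen 2 hU hl'] at hcomp
  show Δ (h ∘ L) l' = 0
  rw [laplacian_eq_iteratedFDeriv_complexPlane]
  simp only [hcomp]
  simpa [iteratedFDeriv_two_apply, L] using
    hph.fderiv_fderiv_add_I_smul_eq_zero hU hl' z₀ z₀

theorem exists_mem_sphere_circleAverage_le {f : ℂ → ℝ} {c : ℂ} {R : ℝ}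
    (hf : ContinuousOn f (sphere c |R|)) : ∃ x ∈ sphere c |R|, circleAverage f c R ≤ f x := by
  obtain ⟨x, hx, hmax⟩ := (isCompact_sphere c |R|).exists_isMaxOn
    (NormedSpace.sphere_nonempty.2 (abs_nonneg R)) hf
  exact ⟨x, hx, circleAverage_mono_on_of_le_circle hf.circleIntegrable' hmax⟩

theorem PluriharmonicOn.exists_norm_eq_one_le_comp_smul {h : CE n → ℝ} {U : Set (CE n)}
    (hph : PluriharmonicOn h U) (hU : IsOpen U) {z₀ : CE n}
    (hz₀ : ∀ l : ℂ, ‖l‖ ≤ 1 → l • z₀ ∈ U) : ∃ l : ℂ, ‖l‖ = 1 ∧ h 0 ≤ h (l • z₀) := by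
  have hharm : HarmonicOnNhd (fun l : ℂ => h (l • z₀)) (closedBall 0 |1|) := fun l hl =>
    hph.harmonicAt_comp_smul hU z₀ (hz₀ l (by simpa using hl))
  obtain ⟨l, hl, hle⟩ := exists_mem_sphere_circleAverage_le
    (hharm.continuousOn.mono sphere_subset_closedBall)
  refine ⟨l, by simpa using hl, ?_⟩
  simpa [hharm.circleAverage_eq] using hle

theorem PluriharmonicOn.subset_of_balanced {h : CE n → ℝ} {U S T : Set (CE n)}
    (hph : PluriharmonicOn h U) (hU : IsOpen U) (hS : Balanced ℂ S) (hT : Balanced ℂ T)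
    (hSU : S ⊆ U) (hST : ∀ z ∈ S, h 0 ≤ h z → z ∈ T) : S ⊆ T := by
  intro z hz
  obtain ⟨l, hl, hle⟩ :=
    hph.exists_norm_eq_one_le_comp_smul hU fun l hl => hSU (hS.smul_mem hl hz)
  have hl0 : l ≠ 0 := norm_ne_zero_iff.1 (by rw [hl]; exact one_ne_zero)
  simpa [hl0] using hT.smul_mem (a := l⁻¹) (by simp [hl]) (hST _ (hS.smul_mem hl.le hz) hle)

end Pluriharmonic

open Pointwise in
theorem dilate_zero_eq_smul {E : Type*} [NormedAddCommGroup E] [NormedSpace ℝ E] (c : ℝ)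
    (S : Set E) : dilate c 0 S = c • S := by
  simp [dilate, Set.image_smul]

theorem qform_smul {n : ℕ} (A : Matrix (Fin n) (Fin n) ℂ) (l : ℂ) (w : Fin n → ℂ) :
    qform A (l • w) = normSq l * qform A w := by
  simp only [qform, Matrix.mulVec_smul, star_smul, smul_dotProduct, dotProduct_smul,
    smul_eq_mul, ← mul_assoc, RCLike.star_def, mul_conj, re_ofReal_mul]

theorem balanced_setOf_qform_le {n : ℕ} (A : Matrix (Fin n) (Fin n) ℂ) {μ : ℝ} (hμ : 0 ≤ μ) :
    Balanced ℂ {z : CE n | qform A (fun i => z i) ≤ μ} := by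
  refine balanced_iff_smul_mem.2 fun l hl z (hz : qform A (fun i => z i) ≤ μ) => ?_
  have hl' : normSq l ≤ 1 := by rw [normSq_eq_norm_sq]; nlinarith [norm_nonneg l]
  change qform A (l • fun i => z i) ≤ μ
  rw [qform_smul]
  rcases le_total 0 (qform A fun i => z i) with hq | hq <;> nlinarith [normSq_nonneg l]

theorem uniqueness_of_shape_general (n : ℕ)
    (U : Set (CE n)) (hU : IsOpen U)
    (u h : CE n → ℝ) (hph : PluriharmonicOn h U) (hh0 : h 0 = 0)
    (γ μ : ℝ) (hμ : 0 < μ)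
    (A : Matrix (Fin n) (Fin n) ℂ)
    (E : Set (CE n)) (hE : E = {z : CE n | qform A (fun i => z i) ≤ μ})
    (h1 : ball (0 : CE n) ((1 - γ) * Real.sqrt μ) ⊆ {z ∈ U | u z ≤ u 0 + μ})
    (h2 : {z ∈ U | u z ≤ u 0 + μ} ⊆ ball (0 : CE n) ((1 + γ) * Real.sqrt μ))
    (h4 : dilate (1 - γ) 0 E ⊆ {z ∈ U | u z ≤ h z + u 0 + μ})
    (h5 : {z ∈ U | u z ≤ h z + u 0 + μ} ⊆ dilate (1 + γ) 0 E) :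
    ball (0 : CE n) ((1 - γ) * Real.sqrt μ) ⊆ dilate (1 + γ) 0 E ∧
    dilate (1 - γ) 0 E ⊆ ball (0 : CE n) ((1 + γ) * Real.sqrt μ) := by
  have hEb : Balanced ℂ E := hE ▸ balanced_setOf_qform_le A hμ.le
  simp only [dilate_zero_eq_smul] at h4 h5 ⊢
  constructor
  · refine hph.subset_of_balanced hU balanced_ball_zero (hEb.smul _)
      (h1.trans (Set.sep_subset _ _)) fun z hz hhz => h5 ⟨(h1 hz).1, ?_⟩
    linarith [(h1 hz).2]
  · refine hph.neg.subset_of_balanced hU (hEb.smul _) balanced_ball_zero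
      (h4.trans (Set.sep_subset _ _)) fun z hz hhz => h2 ⟨(h4 hz).1, ?_⟩
    simp only [Pi.neg_apply, neg_le_neg_iff] at hhz
    linarith [(h4 hz).2]

/-- Uniqueness of shape of sections: if a sublevel set of `u` is trapped between the
`(1∓γ)`-balls of radius `√μ` and, after subtracting a pluriharmonic `h` with
`h(0) = 0`, a sublevel set at the same height is trapped between the `(1∓γ)`-dilates
of an ellipsoid `E_μ(0)`, then the ball and the ellipsoid are comparable:
`B_{(1−γ)√μ}(0) ⊆ (1+γ)E_μ(0)` and `(1−γ)E_μ(0) ⊆ B_{(1+γ)√μ}(0)`. -/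
theorem uniqueness_of_shape (n : ℕ) (hn : 0 < n)
    (U : Set (CE n)) (hU : IsOpen U) (h0U : (0 : CE n) ∈ U)
    (u h : CE n → ℝ) (hph : PluriharmonicOn h U) (hh0 : h 0 = 0)
    (γ μ : ℝ) (hγ : 0 < γ) (hγ1 : γ < 1) (hμ : 0 < μ)
    (A : Matrix (Fin n) (Fin n) ℂ) (hA : A.PosDef)
    (E : Set (CE n)) (hE : E = {z : CE n | qform A (fun i => z i) ≤ μ})
    (h1 : ball (0 : CE n) ((1 - γ) * Real.sqrt μ) ⊆ {z ∈ U | u z ≤ u 0 + μ})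
    (h2 : {z ∈ U | u z ≤ u 0 + μ} ⊆ ball (0 : CE n) ((1 + γ) * Real.sqrt μ))
    (h3 : ball (0 : CE n) ((1 + γ) * Real.sqrt μ) ⊆ U)
    (h4 : dilate (1 - γ) 0 E ⊆ {z ∈ U | u z ≤ h z + u 0 + μ})
    (h5 : {z ∈ U | u z ≤ h z + u 0 + μ} ⊆ dilate (1 + γ) 0 E)
    (h6 : dilate (1 + γ) 0 E ⊆ U) :
    ball (0 : CE n) ((1 - γ) * Real.sqrt μ) ⊆ dilate (1 + γ) 0 E ∧
    dilate (1 - γ) 0 E ⊆ ball (0 : CE n) ((1 + γ) * Real.sqrt μ) :=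
  uniqueness_of_shape_general n U hU u h hph hh0 γ μ hμ A E hE h1 h2 h4 h5
end
end
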